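/- (Addition theorem for Hermite polynomials) For every integer n ≥ 0, every integer r ≥ 1, all real numbers a_1,…,a_r not all zero, and all real X_1,…,X_r: ((Σ_{k=1}^r a_k²)^{n/2}/n!) · H_n((Σ_{k=1}^r a_k X_k)/√(Σ_{k=1}^r a_k²)) = Σ_{m_1+⋯+m_r=n} Π_{k=1}^r (a_k^{m_k}/m_k!) H_{m_k}(X_k), where the sum runs over all r-tuples of nonnegative integers (m_1,…,m_r) summing to n. -/

import Mathlib

open Finset

/-- The (physicists') Hermite polynomial `H_n(X)`. -/
noncomputable def Hpoly (n : ℕ) (X : ℝ) : ℝ :=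
  (n.factorial : ℝ) *
    ∑ k ∈ Finset.range (n / 2 + 1),
      (-1) ^ k / ((k.factorial : ℝ) * ((n - 2 * k).factorial : ℝ)) * (2 * X) ^ (n - 2 * k)

/-!
For `c, x` real, `Σ_n (cⁿ/n!) H_n(x) tⁿ = exp(2cxt − c²t²)`, a power series depending only on the
pair `(Z, S) = (cx, c²)` and multiplicative in it. With `c_k = a_k`, `x_k = X_k` the product over
`k` is the series at `(Σ a_k X_k, Σ a_k²)`, which is also the series for `c = √(Σ a_k²)`,
`x = Σ a_k X_k / c`. Comparing `n`-th coefficients gives the theorem.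
-/

open PowerSeries

namespace PowerSeries

theorem coeff_mul_expand {R : Type*} [CommRing R] (p : ℕ) (hp : p ≠ 0) (f g : R⟦X⟧) (n : ℕ) :
    coeff n (f * expand p hp g) =
      ∑ k ∈ range (n / p + 1), coeff (n - p * k) f * coeff k g := by
  rw [coeff_mul, ← Nat.sum_antidiagonal_swap]
  simp only [Nat.sum_antidiagonal_eq_sum_range_succ_mk, Prod.swap, coeff_expand, mul_ite, mul_zero]
  rw [← sum_filter]
  symm
  refine sum_nbij' (p * ·) (· / p) ?_ ?_ ?_ ?_ ?_ <;> intro k hk <;>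
    simp only [mem_filter, mem_range_succ_iff] at hk ⊢
  · exact ⟨(Nat.mul_le_mul_left p hk).trans (Nat.mul_div_le n p), dvd_mul_right p k⟩
  · exact Nat.div_le_div_right hk.1
  · exact Nat.mul_div_cancel_left k (Nat.pos_of_ne_zero hp)
  · exact Nat.mul_div_cancel' hk.2
  · rw [Nat.mul_div_cancel_left k (Nat.pos_of_ne_zero hp)]

theorem coeff_prod_eq_sum_antidiagonalTuple {R : Type*} [CommSemiring R] {r : ℕ}
    (f : Fin r → R⟦X⟧) (n : ℕ) :
    coeff n (∏ k, f k) = ∑ m ∈ Nat.antidiagonalTuple r n, ∏ k, coeff (m k) (f k) := by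
  rw [coeff_prod, finsuppAntidiag, sum_map, ← piAntidiag_univ_fin_eq_antidiagonalTuple]
  exact sum_attach _ (fun m : Fin r → ℕ => ∏ k, coeff (m k) (f k))

end PowerSeries

section HermiteGF

variable {K : Type*} [Field K] [CharZero K]

-- `exp (2zt - st²)`
noncomputable def hermiteGF (z s : K) : K⟦X⟧ :=
  rescale (2 * z) (exp K) * expand 2 two_ne_zero (rescale (-s) (exp K))

theorem hermiteGF_mul (z w s u : K) :
    hermiteGF z s * hermiteGF w u = hermiteGF (z + w) (s + u) := by
  rw [hermiteGF, hermiteGF, hermiteGF, mul_add, neg_add, ← exp_mul_exp_eq_exp_add,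
    ← exp_mul_exp_eq_exp_add, map_mul]
  ring

theorem hermiteGF_zero : hermiteGF (0 : K) 0 = 1 := by
  simp [hermiteGF, rescale_zero]

theorem prod_hermiteGF {ι : Type*} (t : Finset ι) (z s : ι → K) :
    ∏ k ∈ t, hermiteGF (z k) (s k) = hermiteGF (∑ k ∈ t, z k) (∑ k ∈ t, s k) := by
  induction t using Finset.cons_induction with
  | empty => simp [hermiteGF_zero]
  | cons i t hi ih => rw [prod_cons, ih, hermiteGF_mul, sum_cons, sum_cons]

theorem coeff_hermiteGF (n : ℕ) (z s : K) :
    coeff n (hermiteGF z s) =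
      ∑ k ∈ range (n / 2 + 1),
        (2 * z) ^ (n - 2 * k) / (n - 2 * k).factorial * ((-s) ^ k / k.factorial) := by
  simp [hermiteGF, coeff_mul_expand, coeff_rescale, coeff_exp, div_eq_mul_inv]

end HermiteGF

theorem coeff_hermiteGF_mul_sq (n : ℕ) (c x : ℝ) :
    coeff n (hermiteGF (c * x) (c ^ 2)) = c ^ n / n.factorial * Hpoly n x := by
  rw [coeff_hermiteGF, Hpoly, mul_sum, mul_sum]
  refine sum_congr rfl fun k hk => ?_
  have hc : c ^ n = c ^ (n - 2 * k) * (c ^ 2) ^ k := by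
    rw [← pow_mul, ← pow_add, Nat.sub_add_cancel (by grind)]
  rw [hc]
  field_simp
  ring

theorem hermite_addition_general (n r : ℕ) (a X : Fin r → ℝ)
    (ha : ∃ k, a k ≠ 0) :
    (∑ k, (a k) ^ 2) ^ ((n : ℝ) / 2) / (n.factorial : ℝ) *
        Hpoly n ((∑ k, a k * X k) / Real.sqrt (∑ k, (a k) ^ 2)) =
      ∑ m ∈ Finset.Nat.antidiagonalTuple r n,
        ∏ k, (a k) ^ (m k) / ((m k).factorial : ℝ) * Hpoly (m k) (X k) := by
  obtain ⟨k₀, hk₀⟩ := ha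
  set s := ∑ k, a k ^ 2
  have hs : 0 < s := sum_pos' (fun k _ => sq_nonneg (a k)) ⟨k₀, mem_univ _, by positivity⟩
  have hsqrt : Real.sqrt s ^ 2 = s := Real.sq_sqrt hs.le
  have hrpow : s ^ ((n : ℝ) / 2) = Real.sqrt s ^ n := by
    rw [Real.sqrt_eq_rpow, ← Real.rpow_natCast, ← Real.rpow_mul hs.le]
    ring_nf
  calc s ^ ((n : ℝ) / 2) / n.factorial * Hpoly n ((∑ k, a k * X k) / Real.sqrt s)
      = coeff n (hermiteGF (∑ k, a k * X k) s) := by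
        rw [hrpow, ← coeff_hermiteGF_mul_sq, mul_div_cancel₀ _ (Real.sqrt_pos.mpr hs).ne', hsqrt]
    _ = coeff n (∏ k, hermiteGF (a k * X k) (a k ^ 2)) := by rw [prod_hermiteGF]
    _ = _ := by simp only [coeff_prod_eq_sum_antidiagonalTuple, coeff_hermiteGF_mul_sq]

/-- Addition theorem for Hermite polynomials:
`((Σ a_k²)^(n/2)/n!) H_n((Σ a_k X_k)/√(Σ a_k²)) = Σ_{m₁+⋯+m_r=n} Π_k (a_k^(m_k)/m_k!) H_(m_k)(X_k)`. -/
theorem hermite_addition (n r : ℕ) (hr : 1 ≤ r) (a X : Fin r → ℝ)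
    (ha : ∃ k, a k ≠ 0) :
    (∑ k, (a k) ^ 2) ^ ((n : ℝ) / 2) / (n.factorial : ℝ) *
        Hpoly n ((∑ k, a k * X k) / Real.sqrt (∑ k, (a k) ^ 2)) =
      ∑ m ∈ Finset.Nat.antidiagonalTuple r n,
        ∏ k, (a k) ^ (m k) / ((m k).factorial : ℝ) * Hpoly (m k) (X k) :=
  hermite_addition_general n r a X ha
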